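/- For every positive integer m, the group SL₂(ℤ[1/m]) is generated by the two matrices A = [[1,0],[1,1]] and Q = [[1,-1/m],[0,1]]. -/

import Mathlib

/-- The subring ℤ[1/m] of ℚ. -/
def Zinv (m : ℕ) : Subring ℚ := Subring.closure {((m : ℚ))⁻¹}

lemma invMem (m : ℕ) : ((m : ℚ))⁻¹ ∈ Zinv m :=
  Subring.subset_closure (Set.mem_singleton _)

def matA (m : ℕ) : Matrix.SpecialLinearGroup (Fin 2) (Zinv m) :=
  ⟨!![1, 0; 1, 1], by simp [Matrix.det_fin_two_of]⟩

def matQ (m : ℕ) : Matrix.SpecialLinearGroup (Fin 2) (Zinv m) :=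
  ⟨!![1, ⟨-((m : ℚ))⁻¹, neg_mem (invMem m)⟩; 0, 1], by simp [Matrix.det_fin_two_of]⟩

def matB (m : ℕ) : Matrix.SpecialLinearGroup (Fin 2) (Zinv m) :=
  ⟨!![0, 1; -1, 0], by simp [Matrix.det_fin_two_of]⟩

def matU (m : ℕ) (hm : 0 < m) : Matrix.SpecialLinearGroup (Fin 2) (Zinv m) :=
  ⟨!![(m : Zinv m), 0; 0, ⟨((m : ℚ))⁻¹, invMem m⟩], by
    have hm0 : (m : ℚ) ≠ 0 := Nat.cast_ne_zero.2 hm.ne'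
    apply Subtype.ext
    simp [Matrix.det_fin_two_of, mul_inv_cancel₀ hm0]⟩

/-! Write `U x = !![1, x; 0, 1]` and `L x = !![1, 0; x, 1]`, and let `H = ⟨A, Q⟩`, so `A = L 1` and
`Q = U (-1/m)`. Then `H` contains `U (k/m)` for all `k ∈ ℤ`, in particular `U 1` and `U m`. The Weyl
element `U 1 * L (-1) * U 1` conjugates `U x` to `L (-x)`, and `U m * L (-1/m) * U m` conjugates `U x`
to `L (-x/m²)`; so `{x | U x ∈ H}` is an additive group closed under `x ↦ m * (x/m²) = x/m`, hence all
of `ℤ[1/m]`. Finally the elementary matrices generate `SL₂` of every subring of `ℚ`: scaling the first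
column by a common denominator, the Euclidean algorithm on the resulting integers reduces any matrix
to an upper triangular one.
-/

open Matrix MatrixGroups

theorem Subring.mul_mem_of_forall_generator_mul_mem {A : Type*} [Ring A] {s : Set A}
    (S : AddSubgroup (Subring.closure s))
    (hs : ∀ g (hg : g ∈ s), ∀ x ∈ S, (⟨g, Subring.subset_closure hg⟩ : Subring.closure s) * x ∈ S)
    (r : Subring.closure s) {x : Subring.closure s} (hx : x ∈ S) : r * x ∈ S := by
  obtain ⟨r, hr⟩ := r
  induction hr using Subring.closure_induction generalizing x with
  | mem g hg => exact hs g hg x hx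
  | zero => exact (zero_mul x).symm ▸ S.zero_mem
  | one => exact (one_mul x).symm ▸ hx
  | add a b ha hb iha ihb => exact (add_mul ⟨a, ha⟩ ⟨b, hb⟩ x).symm ▸ S.add_mem (iha hx) (ihb hx)
  | neg a ha ih => exact (neg_mul ⟨a, ha⟩ x).symm ▸ S.neg_mem (ih hx)
  | mul a b ha hb iha ihb => exact (mul_assoc ⟨a, ha⟩ ⟨b, hb⟩ x).symm ▸ iha (ihb hx)

namespace SL2

variable {R : Type*} [CommRing R]

def upper (x : R) : SL(2, R) := ⟨!![1, x; 0, 1], by simp [det_fin_two_of]⟩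

def lower (x : R) : SL(2, R) := ⟨!![1, 0; x, 1], by simp [det_fin_two_of]⟩

@[simp] lemma coe_upper (x : R) : (upper x : Matrix (Fin 2) (Fin 2) R) = !![1, x; 0, 1] := rfl

@[simp] lemma coe_lower (x : R) : (lower x : Matrix (Fin 2) (Fin 2) R) = !![1, 0; x, 1] := rfl

lemma upper_add (x y : R) : upper (x + y) = upper x * upper y := by
  ext i j; fin_cases i <;> fin_cases j <;> simp [add_comm]

lemma lower_add (x y : R) : lower (x + y) = lower x * lower y := by
  ext i j; fin_cases i <;> fin_cases j <;> simp

lemma upper_zero : upper (0 : R) = 1 := by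
  ext i j; fin_cases i <;> fin_cases j <;> simp

lemma lower_zero : lower (0 : R) = 1 := by
  ext i j; fin_cases i <;> fin_cases j <;> simp

lemma upper_neg (x : R) : upper (-x) = (upper x)⁻¹ :=
  eq_inv_of_mul_eq_one_left <| by rw [← upper_add, neg_add_cancel, upper_zero]

lemma lower_neg (x : R) : lower (-x) = (lower x)⁻¹ :=
  eq_inv_of_mul_eq_one_left <| by rw [← lower_add, neg_add_cancel, lower_zero]

-- `upper u * lower (-v) * upper u = !![0, u; -v, 0]`
lemma upper_lower_upper_mul_upper {u v : R} (huv : u * v = 1) (x : R) :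
    upper u * lower (-v) * upper u * upper x =
      lower (-(v ^ 2 * x)) * (upper u * lower (-v) * upper u) := by
  ext i j
  fin_cases i <;> fin_cases j <;> simp <;> grind

-- `!![a, b; 0, d] = upper a * lower (-d) * upper a * W⁻¹ * upper (d * b)` with
-- `W = upper 1 * lower (-1) * upper 1` and `W⁻¹ = upper (-1) * lower 1 * upper (-1)`
lemma eq_of_lower_left_eq_zero (M : SL(2, R)) (hM : M 1 0 = 0) :
    M = upper (M 0 0) * lower (-M 1 1) * upper (M 0 0 - 1) * lower 1 *
      upper (M 1 1 * M 0 1 - 1) := by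
  have hdet : M 0 0 * M 1 1 = 1 := by
    have := M.det_coe
    rwa [det_fin_two, hM, mul_zero, sub_zero] at this
  ext i j
  fin_cases i <;> fin_cases j <;> simp [hM] <;> grind

def upperAddSubgroup (H : Subgroup SL(2, R)) : AddSubgroup R where
  carrier := {x | upper x ∈ H}
  add_mem' hx hy := by simpa only [Set.mem_ofPred_eq, upper_add] using H.mul_mem hx hy
  zero_mem' := by simpa only [Set.mem_ofPred_eq, upper_zero] using H.one_mem
  neg_mem' hx := by simpa only [Set.mem_ofPred_eq, upper_neg] using H.inv_mem hx

@[simp] lemma mem_upperAddSubgroup {H : Subgroup SL(2, R)} {x : R} :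
    x ∈ upperAddSubgroup H ↔ upper x ∈ H := Iff.rfl

section Subgroup

variable {H : Subgroup SL(2, R)}

lemma lower_neg_mem_iff {u v : R} (huv : u * v = 1) (hu : upper u ∈ H) (hv : lower (-v) ∈ H)
    (x : R) : lower (-(v ^ 2 * x)) ∈ H ↔ upper x ∈ H := by
  have hP : upper u * lower (-v) * upper u ∈ H := H.mul_mem (H.mul_mem hu hv) hu
  rw [← H.mul_mem_cancel_right hP, ← upper_lower_upper_mul_upper huv, H.mul_mem_cancel_left hP]

lemma lower_mem_iff_upper_neg_mem (hu : upper 1 ∈ H) (hl : lower 1 ∈ H) (x : R) :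
    lower x ∈ H ↔ upper (-x) ∈ H := by
  simpa using lower_neg_mem_iff (one_mul (1 : R)) hu (by simpa [lower_neg] using H.inv_mem hl) (-x)

lemma mem_of_lower_left_eq_zero (hU : ∀ x, upper x ∈ H) (hL : ∀ x, lower x ∈ H) {M : SL(2, R)}
    (hM : M 1 0 = 0) : M ∈ H := by
  rw [eq_of_lower_left_eq_zero M hM]
  exact H.mul_mem (H.mul_mem (H.mul_mem (H.mul_mem (hU _) (hL _)) (hU _)) (hL _)) (hU _)

end Subgroup

section SubringRat

variable {R : Subring ℚ} {H : Subgroup SL(2, R)}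

lemma mem_of_mul_firstColumn_eq_intCast (hU : ∀ x, upper x ∈ H) (hL : ∀ x, lower x ∈ H) {D : ℚ}
    (hD : D ≠ 0) (M : SL(2, R)) (p q : ℤ) (hp : D * M 0 0 = p) (hq : D * M 1 0 = q) :
    M ∈ H := by
  induction hn : q.natAbs using Nat.strong_induction_on generalizing M p q with
  | _ n ih =>
  subst hn
  rcases eq_or_ne q 0 with rfl | hq0
  · exact mem_of_lower_left_eq_zero hU hL (Subtype.ext (by simpa [hD] using hq))
  · set s : R := ((p / q : ℤ) : R)
    -- `lower s * !![0, -1; 1, 0]` maps the first column `(a, c)` to `(-c, a - s * c)`, which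
    -- scales to `(-q, p % q)`.
    set M' := lower s * (upper (-1) * lower 1 * upper (-1)) * M
    have h00 : M' 0 0 = -M 1 0 := by simp [M', mul_apply, Fin.sum_univ_two]
    have h10 : M' 1 0 = M 0 0 - s * M 1 0 := by simp [M', mul_apply, Fin.sum_univ_two, sub_eq_add_neg]
    have hlt : (p % q).natAbs < q.natAbs := by
      have := Int.emod_lt_abs p hq0
      have := Int.emod_nonneg p hq0
      rw [Int.abs_eq_natAbs] at *
      omega
    have hM' : M' ∈ H := by
      refine ih _ hlt M' (-q) (p % q) ?_ ?_ rfl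
      · rw [h00]; push_cast; rw [← hq]; ring
      · rw [h10, Int.emod_def]; push_cast [s]; rw [← hp, ← hq]; ring
    refine (H.mul_mem_cancel_left (H.mul_mem (hL s) ?_)).1 hM'
    exact H.mul_mem (H.mul_mem (hU _) (hL _)) (hU _)

theorem eq_top_of_forall_upper_mem_of_forall_lower_mem (hU : ∀ x, upper x ∈ H)
    (hL : ∀ x, lower x ∈ H) : H = ⊤ := by
  refine eq_top_iff.2 fun M _ => ?_
  set a : ℚ := ((M 0 0 : R) : ℚ)
  set c : ℚ := ((M 1 0 : R) : ℚ)
  refine mem_of_mul_firstColumn_eq_intCast hU hL (D := a.den * c.den) (by positivity) M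
    (a.num * c.den) (c.num * a.den) ?_ ?_
  · push_cast; rw [← Rat.mul_den_eq_num]; ring
  · push_cast; rw [← Rat.mul_den_eq_num]; ring

end SubringRat

end SL2

namespace Zinv

open SL2

def invGen (m : ℕ) : Zinv m := ⟨(m : ℚ)⁻¹, invMem m⟩

lemma natCast_mul_invGen {m : ℕ} (hm : 0 < m) : (m : Zinv m) * invGen m = 1 :=
  Subtype.ext (mul_inv_cancel₀ (Nat.cast_ne_zero.2 hm.ne'))

lemma matA_eq (m : ℕ) : matA m = lower 1 := by
  ext i j; fin_cases i <;> fin_cases j <;> rfl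

lemma matQ_eq (m : ℕ) : matQ m = upper (-invGen m) := by
  ext i j; fin_cases i <;> fin_cases j <;> rfl

lemma upper_mem_of_matA_mem_of_matQ_mem {m : ℕ} (hm : 0 < m) {H : Subgroup SL(2, Zinv m)}
    (hA : matA m ∈ H) (hQ : matQ m ∈ H) (x : Zinv m) : upper x ∈ H := by
  have hUinv : upper (invGen m) ∈ H := by simpa [matQ_eq, ← upper_neg] using H.inv_mem hQ
  have hU1 : upper 1 ∈ H := by
    simpa [nsmul_eq_mul, natCast_mul_invGen hm] using (upperAddSubgroup H).nsmul_mem hUinv m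
  have hLU := lower_mem_iff_upper_neg_mem hU1 (matA_eq m ▸ hA)
  have hUm : upper (m : Zinv m) ∈ H := by simpa using (upperAddSubgroup H).nsmul_mem hU1 m
  have hLinv : lower (-invGen m) ∈ H := (hLU _).2 (by simpa using hUinv)
  have hinvGen_mul : ∀ y ∈ upperAddSubgroup H, invGen m * y ∈ upperAddSubgroup H := by
    intro y hy
    have hsq : upper (invGen m ^ 2 * y) ∈ H := by
      simpa using (hLU _).1 ((lower_neg_mem_iff (natCast_mul_invGen hm) hUm hLinv y).2 hy)
    have hy' : invGen m * y = m • (invGen m ^ 2 * y) := by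
      rw [nsmul_eq_mul, sq, ← mul_assoc, ← mul_assoc, natCast_mul_invGen hm, one_mul]
    exact hy' ▸ (upperAddSubgroup H).nsmul_mem hsq m
  have hx : x * 1 ∈ upperAddSubgroup H :=
    Subring.mul_mem_of_forall_generator_mul_mem _ (by rintro g rfl; exact hinvGen_mul) x hU1
  simpa using hx

end Zinv

theorem stmt_14 (m : ℕ) (hm : 0 < m) :
    Subgroup.closure {matA m, matQ m} = (⊤ : Subgroup (Matrix.SpecialLinearGroup (Fin 2) (Zinv m))) := by
  have hA : matA m ∈ Subgroup.closure {matA m, matQ m} := Subgroup.subset_closure (by simp)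
  have hQ : matQ m ∈ Subgroup.closure {matA m, matQ m} := Subgroup.subset_closure (by simp)
  have hU := Zinv.upper_mem_of_matA_mem_of_matQ_mem hm hA hQ
  refine SL2.eq_top_of_forall_upper_mem_of_forall_lower_mem hU fun x => ?_
  exact (SL2.lower_mem_iff_upper_neg_mem (hU 1) (Zinv.matA_eq m ▸ hA) x).2 (hU _)
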